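/- Soundness of the modified system: every judgment Γ ⊢ S <: T derivable in Pientka's modified subtyping system (with SA-Hyp and SA-Tr-TVar) is derivable in the original algorithmic system (with SA-Trans-TVar), provided all types bound in Γ are well-scoped with respect to Γ. -/

import Mathlib

inductive Ty where
  | var : ℕ → Ty
  | top : Ty
  | arrow : Ty → Ty → Ty
  | all : ℕ → Ty → Ty → Ty

abbrev Env := List (ℕ × Ty)

def freeVars : Ty → Finset ℕ
  | .var x => {x}
  | .top => ∅
  | .arrow a b => freeVars a ∪ freeVars b
  | .all x a b => freeVars a ∪ (freeVars b \ {x})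

def boundVars (Γ : Env) : Finset ℕ := (Γ.map Prod.fst).toFinset

/-- A type is well-scoped in Γ if all its free variables are bound in Γ. -/
def WellScoped (Γ : Env) (t : Ty) : Prop := freeVars t ⊆ boundVars Γ

/-- The original algorithmic subtyping system for F<:. -/
inductive Subty : Env → Ty → Ty → Prop where
  | top {Γ S} : WellScoped Γ S → Subty Γ S .top
  | refl {Γ X} : X ∈ boundVars Γ → Subty Γ (.var X) (.var X)
  | trans_tvar {Γ X U T} : (X, U) ∈ Γ → Subty Γ U T → Subty Γ (.var X) T
  | arrow {Γ S₁ S₂ T₁ T₂} : Subty Γ T₁ S₁ → Subty Γ S₂ T₂ →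
      Subty Γ (.arrow S₁ S₂) (.arrow T₁ T₂)
  | all {Γ X S₁ S₂ T₁ T₂} : Subty Γ T₁ S₁ → Subty ((X, T₁) :: Γ) S₂ T₂ →
      Subty Γ (.all X S₁ S₂) (.all X T₁ T₂)

/-- Pientka's modified subtyping system, with SA-Hyp and SA-Tr-TVar
    in place of SA-Trans-TVar. -/
inductive Subty' : Env → Ty → Ty → Prop where
  | top {Γ S} : WellScoped Γ S → Subty' Γ S .top
  | refl {Γ X} : X ∈ boundVars Γ → Subty' Γ (.var X) (.var X)
  | hyp {Γ X T} : (X, T) ∈ Γ → Subty' Γ (.var X) T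
  | tr_tvar {Γ X U T} : Subty' Γ (.var X) U → Subty' Γ U T → Subty' Γ (.var X) T
  | arrow {Γ S₁ S₂ T₁ T₂} : Subty' Γ T₁ S₁ → Subty' Γ S₂ T₂ →
      Subty' Γ (.arrow S₁ S₂) (.arrow T₁ T₂)
  | all {Γ X S₁ S₂ T₁ T₂} : Subty' Γ T₁ S₁ → Subty' ((X, T₁) :: Γ) S₂ T₂ →
      Subty' Γ (.all X S₁ S₂) (.all X T₁ T₂)

/-!
Every rule of the modified system is admissible in the original one. SA-Hyp is SA-Trans-TVar
followed by reflexivity at the bound, which is well-scoped by assumption. SA-Tr-TVar needs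
transitivity of the original system, proved by induction on the middle type together with
narrowing: in the `∀` case the body derivation under `X <: Q₁` is narrowed to `X <: T₁`, which
uses transitivity only at the smaller type `Q₁`.
-/

lemma mem_boundVars {X : ℕ} {Γ : Env} : X ∈ boundVars Γ ↔ ∃ U, (X, U) ∈ Γ := by
  simp [boundVars]

lemma boundVars_cons (p : ℕ × Ty) (Γ : Env) : boundVars (p :: Γ) = insert p.1 (boundVars Γ) := by
  simp [boundVars]

lemma boundVars_mono {Γ Γ' : Env} (h : Γ ⊆ Γ') : boundVars Γ ⊆ boundVars Γ' := fun _ hX =>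
  let ⟨U, hXU⟩ := mem_boundVars.1 hX
  mem_boundVars.2 ⟨U, h hXU⟩

namespace WellScoped

variable {Γ : Env}

lemma mono {Γ' : Env} {t : Ty} (h : WellScoped Γ t) (hΓ : boundVars Γ ⊆ boundVars Γ') :
    WellScoped Γ' t :=
  h.trans hΓ

lemma cons {t : Ty} (h : WellScoped Γ t) (p : ℕ × Ty) : WellScoped (p :: Γ) t :=
  h.mono (by simp [boundVars_cons])

lemma var_iff {X : ℕ} : WellScoped Γ (.var X) ↔ X ∈ boundVars Γ := by
  simp [WellScoped, freeVars]

lemma top : WellScoped Γ .top := by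
  simp [WellScoped, freeVars]

lemma arrow_iff {a b : Ty} : WellScoped Γ (.arrow a b) ↔ WellScoped Γ a ∧ WellScoped Γ b := by
  simp only [WellScoped, freeVars, Finset.union_subset_iff]

lemma all_iff {X : ℕ} {a b U : Ty} :
    WellScoped Γ (.all X a b) ↔ WellScoped Γ a ∧ WellScoped ((X, U) :: Γ) b := by
  simp only [WellScoped, freeVars, Finset.union_subset_iff, sdiff_le_iff,
    boundVars_cons, Finset.insert_eq, Finset.sup_eq_union]

end WellScoped

namespace Subty

lemma wellScoped {Γ : Env} {S T : Ty} (h : Subty Γ S T) : WellScoped Γ S ∧ WellScoped Γ T := by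
  induction h with
  | top hS => exact ⟨hS, .top⟩
  | refl hX => exact ⟨WellScoped.var_iff.2 hX, WellScoped.var_iff.2 hX⟩
  | trans_tvar hXU _ ih => exact ⟨WellScoped.var_iff.2 (mem_boundVars.2 ⟨_, hXU⟩), ih.2⟩
  | arrow _ _ ih₁ ih₂ =>
    exact ⟨WellScoped.arrow_iff.2 ⟨ih₁.2, ih₂.1⟩, WellScoped.arrow_iff.2 ⟨ih₁.1, ih₂.2⟩⟩
  | all _ _ ih₁ ih₂ =>
    exact ⟨WellScoped.all_iff.2 ⟨ih₁.2, ih₂.1⟩, WellScoped.all_iff.2 ⟨ih₁.1, ih₂.2⟩⟩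

lemma refl_of_wellScoped {Γ : Env} {T : Ty} (h : WellScoped Γ T) : Subty Γ T T := by
  induction T generalizing Γ with
  | var X => exact .refl (WellScoped.var_iff.1 h)
  | top => exact .top h
  | arrow a b iha ihb =>
    obtain ⟨ha, hb⟩ := WellScoped.arrow_iff.1 h
    exact .arrow (iha ha) (ihb hb)
  | all X a b iha ihb =>
    obtain ⟨ha, hb⟩ := (WellScoped.all_iff (U := a)).1 h
    exact .all (iha ha) (ihb hb)

lemma mono {Γ Γ' : Env} {S T : Ty} (h : Subty Γ S T) (hΓ : Γ ⊆ Γ') : Subty Γ' S T := by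
  induction h generalizing Γ' with
  | top hS => exact .top (hS.mono (boundVars_mono hΓ))
  | refl hX => exact .refl (boundVars_mono hΓ hX)
  | trans_tvar hXU _ ih => exact .trans_tvar (hΓ hXU) (ih hΓ)
  | arrow _ _ ih₁ ih₂ => exact .arrow (ih₁ hΓ) (ih₂ hΓ)
  | all _ _ ih₁ ih₂ => exact .all (ih₁ hΓ) (ih₂ (List.cons_subset_cons _ hΓ))

def TransAt (Q : Ty) : Prop := ∀ {Γ : Env} {S T : Ty}, Subty Γ S Q → Subty Γ Q T → Subty Γ S T

lemma narrow {Q : Ty} (htrans : TransAt Q) {E E' : Env} {M N : Ty} (h : Subty E M N)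
    (hbv : boundVars E ⊆ boundVars E')
    (hbind : ∀ {Y U}, (Y, U) ∈ E → (Y, U) ∈ E' ∨ U = Q ∧ ∃ P, (Y, P) ∈ E' ∧ Subty E' P Q) :
    Subty E' M N := by
  induction h generalizing E' with
  | top hM => exact .top (hM.mono hbv)
  | refl hY => exact .refl (hbv hY)
  | trans_tvar hYU _ ih =>
    obtain hYU' | ⟨rfl, P, hYP, hPQ⟩ := hbind hYU
    · exact .trans_tvar hYU' (ih hbv hbind)
    · exact .trans_tvar hYP (htrans hPQ (ih hbv hbind))
  | arrow _ _ ih₁ ih₂ => exact .arrow (ih₁ hbv hbind) (ih₂ hbv hbind)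
  | @all _ X _ _ T₁ _ _ _ ih₁ ih₂ =>
    refine .all (ih₁ hbv hbind) (ih₂ ?_ ?_)
    · simpa only [boundVars_cons] using Finset.insert_subset_insert X hbv
    · rintro Y U (_ | ⟨_, hYU⟩)
      · exact .inl List.mem_cons_self
      · obtain hYU' | ⟨hUQ, P, hYP, hPQ⟩ := hbind hYU
        · exact .inl (List.mem_cons_of_mem _ hYU')
        · exact .inr ⟨hUQ, P, List.mem_cons_of_mem _ hYP,
            hPQ.mono (List.subset_cons_self _ _)⟩

lemma transAt_of_lt {Q : Ty} (ih : ∀ Q', sizeOf Q' < sizeOf Q → TransAt Q') : TransAt Q := by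
  intro Γ S T h₁ h₂
  induction h₁ generalizing T with
  | top hS => cases h₂; exact .top hS
  | refl => exact h₂
  | trans_tvar hXU _ ihU => exact .trans_tvar hXU (ihU ih h₂)
  | arrow hQ₁S₁ hS₂Q₂ =>
    cases h₂ with
    | top => exact .top (wellScoped (.arrow hQ₁S₁ hS₂Q₂)).1
    | arrow hT₁Q₁ hQ₂T₂ =>
      exact .arrow (ih _ (by simp +arith) hT₁Q₁ hQ₁S₁) (ih _ (by simp +arith) hS₂Q₂ hQ₂T₂)
  | @all Γ X _ S₂ Q₁ Q₂ hQ₁S₁ hS₂Q₂ =>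
    cases h₂ with
    | top => exact .top (wellScoped (.all hQ₁S₁ hS₂Q₂)).1
    | @all _ _ _ _ T₁ _ hT₁Q₁ hQ₂T₂ =>
      have hS₂Q₂' : Subty ((X, T₁) :: Γ) S₂ Q₂ :=
        narrow (ih Q₁ (by simp +arith)) hS₂Q₂ (by simp only [boundVars_cons]; rfl)
        (by
          rintro Y U (_ | ⟨_, hYU⟩)
          · exact .inr ⟨rfl, _, List.mem_cons_self, hT₁Q₁.mono (List.subset_cons_self _ _)⟩
          · exact .inl (List.mem_cons_of_mem _ hYU))
      exact .all (ih _ (by simp +arith) hT₁Q₁ hQ₁S₁) (ih _ (by simp +arith) hS₂Q₂' hQ₂T₂)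

theorem transAt (Q : Ty) : TransAt Q :=
  transAt_of_lt fun Q' _ => transAt Q'
termination_by sizeOf Q

theorem trans {Γ : Env} {S Q T : Ty} (h₁ : Subty Γ S Q) (h₂ : Subty Γ Q T) : Subty Γ S T :=
  transAt Q h₁ h₂

end Subty

theorem sub'_sound (Γ : Env) (S T : Ty)
    (hΓ : ∀ b ∈ Γ, WellScoped Γ b.2)
    (h : Subty' Γ S T) : Subty Γ S T := by
  induction h with
  | top hS => exact .top hS
  | refl hX => exact .refl hX
  | hyp hXT => exact .trans_tvar hXT (.refl_of_wellScoped (hΓ _ hXT))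
  | tr_tvar _ _ ih₁ ih₂ => exact (ih₁ hΓ).trans (ih₂ hΓ)
  | arrow _ _ ih₁ ih₂ => exact .arrow (ih₁ hΓ) (ih₂ hΓ)
  | all _ _ ih₁ ih₂ =>
    have hT₁S₁ := ih₁ hΓ
    refine .all hT₁S₁ (ih₂ ?_)
    rintro b (_ | ⟨_, hb⟩)
    exacts [hT₁S₁.wellScoped.1.cons _, (hΓ b hb).cons _]
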